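/- Let f : ℝ_{>0} → ℝ be given by f(t) = tr((A^T (V + t·e e^T)^{-1} A)^{-1}) where A is a real m×3 full-column-rank matrix, V is diagonal with positive diagonal entries, and e is the all-ones vector. Then f(t) ≥ f(0) for all t ≥ 0, i.e., adding the rank-one term σ_0² e e^T to the noise covariance cannot decrease the CRLB trace. -/

import Mathlib

/-!
Matrix inversion is antitone on positive definite matrices for the Loewner order, and congruence
`P ↦ Bᴴ P B` is monotone. Hence the CRLB `P ↦ (Bᴴ P⁻¹ B)⁻¹` is monotone in the noise covariance
`P` whenever `B` is injective, and `V ≤ V + t eeᵀ` because `eeᵀ` is positive semidefinite.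
Taking traces gives the claim.
-/

open Matrix
open scoped MatrixOrder ComplexOrder

namespace Matrix

theorem mulVec_injective_of_rank_eq_card {m n K : Type*} [Fintype n] [Field K] {A : Matrix m n K}
    (hA : A.rank = Fintype.card n) : Function.Injective A.mulVec := by
  have h := LinearMap.finrank_range_add_finrank_ker A.mulVecLin
  rw [← Matrix.rank, hA, Module.finrank_fintype_fun_eq_card, add_eq_left,
    Submodule.finrank_eq_zero, LinearMap.ker_eq_bot] at h
  exact h

variable {m n 𝕜 : Type*} [Fintype m] [Fintype n]

theorem posSemidef_allOnes {R : Type*} [CommRing R] [PartialOrder R] [StarRing R]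
    [StarOrderedRing R] : (of fun _ _ : n => (1 : R)).PosSemidef := by
  simpa [vecMulVec] using posSemidef_vecMulVec_self_star (1 : n → R)

variable [RCLike 𝕜]

theorem conjTranspose_mul_mul_le_of_le {M N : Matrix m m 𝕜} (hMN : M ≤ N) (B : Matrix m n 𝕜) :
    Bᴴ * M * B ≤ Bᴴ * N * B := by
  rw [le_iff, ← Matrix.sub_mul, ← Matrix.mul_sub]
  exact hMN.conjTranspose_mul_mul_same B

-- The Schur complements of the block matrix `[N 1; 1 M⁻¹]` are `M⁻¹ - N⁻¹` and `N - M`.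
theorem PosDef.inv_le_inv [DecidableEq n] {M N : Matrix n n 𝕜} (hM : M.PosDef) (hMN : M ≤ N) :
    N⁻¹ ≤ M⁻¹ := by
  have hN : N.PosDef := by simpa using hM.add_posSemidef hMN
  let := hN.isUnit.invertible
  let := hM.isUnit.invertible
  let := hM.inv.isUnit.invertible
  have h₁ := PosDef.fromBlocks₁₁ (1 : Matrix n n 𝕜) M⁻¹ hN
  have h₂ := PosDef.fromBlocks₂₂ N (1 : Matrix n n 𝕜) hM.inv
  simp only [conjTranspose_one, Matrix.one_mul, Matrix.mul_one, inv_inv_of_invertible] at h₁ h₂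
  exact h₁.mp (h₂.mpr hMN)

theorem PosDef.inv_conjTranspose_mul_inv_mul_le_of_le [DecidableEq m] [DecidableEq n]
    {P Q : Matrix m m 𝕜} {B : Matrix m n 𝕜} (hB : Function.Injective B.mulVec) (hP : P.PosDef)
    (hPQ : P ≤ Q) : (Bᴴ * P⁻¹ * B)⁻¹ ≤ (Bᴴ * Q⁻¹ * B)⁻¹ := by
  have hQ : Q.PosDef := by simpa using hP.add_posSemidef hPQ
  exact PosDef.inv_le_inv (hQ.inv.conjTranspose_mul_mul_same hB)
    (conjTranspose_mul_mul_le_of_le (hP.inv_le_inv hPQ) B)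

end Matrix

theorem stmt_12_general (m : ℕ) (A : Matrix (Fin m) (Fin 3) ℝ) (hA : A.rank = 3)
    (d : Fin m → ℝ) (hd : ∀ i, 0 < d i) (t : ℝ) (ht : 0 ≤ t) :
    ((Aᵀ * (Matrix.diagonal d)⁻¹ * A)⁻¹).trace ≤
      ((Aᵀ * (Matrix.diagonal d + t • (Matrix.of fun _ _ : Fin m => (1 : ℝ)))⁻¹ * A)⁻¹).trace := by
  have hA' : Function.Injective A.mulVec := mulVec_injective_of_rank_eq_card (by simpa using hA)
  have hV : (diagonal d).PosDef := PosDef.diagonal hd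
  have hVW : diagonal d ≤ diagonal d + t • of fun _ _ : Fin m => (1 : ℝ) :=
    le_add_of_nonneg_right (nonneg_iff_posSemidef.mpr (posSemidef_allOnes.smul ht))
  have h := hV.inv_conjTranspose_mul_inv_mul_le_of_le hA' hVW
  rw [conjTranspose_eq_transpose_of_trivial] at h
  exact (tracePositiveLinearMap (Fin 3) ℝ ℝ).monotone' h

/-- Adding the rank-one term `t·eeᵀ` (`t ≥ 0`) to the diagonal noise covariance cannot
decrease the CRLB trace: `tr((Aᵀ(V + t eeᵀ)⁻¹A)⁻¹) ≥ tr((Aᵀ V⁻¹ A)⁻¹)`. -/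
theorem stmt_12 (m : ℕ) (hm : 3 ≤ m) (A : Matrix (Fin m) (Fin 3) ℝ) (hA : A.rank = 3)
    (d : Fin m → ℝ) (hd : ∀ i, 0 < d i) (t : ℝ) (ht : 0 ≤ t) :
    ((Aᵀ * (Matrix.diagonal d)⁻¹ * A)⁻¹).trace ≤
      ((Aᵀ * (Matrix.diagonal d + t • (Matrix.of fun _ _ : Fin m => (1 : ℝ)))⁻¹ * A)⁻¹).trace :=
  stmt_12_general m A hA d hd t ht
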